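/- If x : ℝ → ℝ³ satisfies m̃·ẍ = -(C̃/|x|³)·x with x nowhere zero, then the Laplace–Runge–Lenz vector A = m̃·ẋ × L - m̃·C̃·x/|x|, where L = m̃·(x × ẋ), is constant in time. -/

import Mathlib

/-! The force is central, so `x × ẍ = 0` and the angular momentum `L` is conserved. Then
`m̃ ẍ × L = -(C̃/|x|³) x × L`, and Lagrange's formula `x × (x × ẋ) = ⟪x, ẋ⟫ x - |x|² ẋ` turns
this into `m̃ C̃ (ẋ/|x| - ⟪x, ẋ⟫ x/|x|³)`, which is `m̃ C̃` times the derivative of `x/|x|`;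
so the two terms of `A'` cancel. -/

/-- Cross product on Euclidean 3-space. -/
noncomputable def cross3 (u v : EuclideanSpace ℝ (Fin 3)) : EuclideanSpace ℝ (Fin 3) :=
  WithLp.toLp 2 (crossProduct (u : Fin 3 → ℝ) (v : Fin 3 → ℝ))

local notation "E3" => EuclideanSpace ℝ (Fin 3)

open scoped InnerProductSpace

theorem isBilinearMap_cross3 : IsBilinearMap ℝ cross3 where
  add_left _ _ _ := by simp [cross3]
  smul_left _ _ _ := by simp [cross3]
  add_right _ _ _ := by simp [cross3]
  smul_right _ _ _ := by simp [cross3]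

theorem cross3_self (u : E3) : cross3 u u = 0 := by
  simp [cross3, cross_self]

theorem cross3_zero_right (u : E3) : cross3 u 0 = 0 := by
  simp [cross3]

theorem cross3_cross3_self (u v : E3) :
    cross3 u (cross3 u v) = ⟪u, v⟫_ℝ • u - ‖u‖ ^ 2 • v := by
  ext i
  fin_cases i <;>
    simp [cross3, cross_apply, PiLp.inner_apply, EuclideanSpace.norm_sq_eq, Fin.sum_univ_three] <;>
    ring

theorem HasDerivAt.cross3 {u v : ℝ → E3} {u' v' : E3} {t : ℝ}
    (hu : HasDerivAt u u' t) (hv : HasDerivAt v v' t) :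
    HasDerivAt (fun s ↦ cross3 (u s) (v s)) (cross3 (u t) v' + cross3 u' (v t)) t :=
  isBilinearMap_cross3.toContinuousBilinearMap.hasDerivAt_of_bilinear (fun _ ↦ hu) (fun _ ↦ hv)

theorem HasDerivAt.cross3_deriv {x x' : ℝ → E3} {a : E3} {t : ℝ}
    (hx : HasDerivAt x (x' t) t) (hx' : HasDerivAt x' a t) :
    HasDerivAt (fun s ↦ _root_.cross3 (x s) (x' s)) (_root_.cross3 (x t) a) t := by
  simpa [cross3_self] using hx.cross3 hx'

section InnerProductSpace

variable {F : Type*} [NormedAddCommGroup F] [InnerProductSpace ℝ F] {f : ℝ → F} {f' : F} {t : ℝ}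

theorem HasDerivAt.norm (hf : HasDerivAt f f' t) (h0 : f t ≠ 0) :
    HasDerivAt (‖f ·‖) (⟪f t, f'⟫_ℝ / ‖f t‖) t := by
  have hsq : ‖f t‖ ^ 2 ≠ 0 := by positivity
  convert hf.norm_sq.sqrt hsq using 1
  · simp [Real.sqrt_sq (norm_nonneg _)]
  · rw [Real.sqrt_sq (norm_nonneg _)]; ring

theorem HasDerivAt.inv_norm_smul (hf : HasDerivAt f f' t) (h0 : f t ≠ 0) :
    HasDerivAt (fun s ↦ ‖f s‖⁻¹ • f s)
      (‖f t‖⁻¹ • f' - (⟪f t, f'⟫_ℝ / ‖f t‖ ^ 3) • f t) t := by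
  have hr : ‖f t‖ ≠ 0 := norm_ne_zero_iff.2 h0
  convert ((hf.norm h0).inv hr).smul hf using 1
  · rfl
  · rw [sub_eq_add_neg, ← neg_smul]
    congr 2
    field_simp

end InnerProductSpace

theorem stmt_7_general (m C : ℝ)
    (x x' x'' : ℝ → EuclideanSpace ℝ (Fin 3))
    (hx : ∀ t, HasDerivAt x (x' t) t)
    (hx' : ∀ t, HasDerivAt x' (x'' t) t)
    (hx0 : ∀ t, x t ≠ 0)
    (heq : ∀ t, m • x'' t = -(C / ‖x t‖ ^ 3) • x t)
    (L A : ℝ → EuclideanSpace ℝ (Fin 3))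
    (hL : ∀ t, L t = m • cross3 (x t) (x' t))
    (hA : ∀ t, A t = m • cross3 (x' t) (L t) - (m * C / ‖x t‖) • x t) :
    ∀ t s : ℝ, A t = A s := by
  have hL' (t : ℝ) : HasDerivAt L 0 t := by
    rw [funext hL]
    refine (((hx t).cross3_deriv (hx' t)).const_smul m).congr_deriv ?_
    rw [← isBilinearMap_cross3.smul_right, heq, isBilinearMap_cross3.smul_right, cross3_self,
      smul_zero]
  have hA' (t : ℝ) : HasDerivAt A 0 t := by
    have hr : ‖x t‖ ≠ 0 := norm_ne_zero_iff.2 (hx0 t)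
    have hAfun : A = fun s ↦ m • cross3 (x' s) (L s) - (m * C) • (‖x s‖⁻¹ • x s) :=
      funext fun s ↦ by rw [hA, smul_smul, div_eq_mul_inv]
    rw [hAfun]
    refine ((((hx' t).cross3 (hL' t)).const_smul m).sub
      (((hx t).inv_norm_smul (hx0 t)).const_smul (m * C))).congr_deriv ?_
    rw [cross3_zero_right, zero_add, ← isBilinearMap_cross3.smul_left, heq,
      isBilinearMap_cross3.smul_left, hL, isBilinearMap_cross3.smul_right, cross3_cross3_self]
    match_scalars <;> field_simp <;> ring
  intro t s
  exact is_const_of_deriv_eq_zero (fun u ↦ (hA' u).differentiableAt) (fun u ↦ (hA' u).deriv) t s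

/-- For the Kepler equation `m̃·ẍ = -(C̃/|x|³)·x` with `x` nowhere zero, the
Laplace–Runge–Lenz vector `A = m̃·ẋ × L - m̃·C̃·x/|x|`, with `L = m̃·(x × ẋ)`,
is constant in time. -/
theorem stmt_7 (m C : ℝ) (hm : 0 < m)
    (x x' x'' : ℝ → EuclideanSpace ℝ (Fin 3))
    (hx : ∀ t, HasDerivAt x (x' t) t)
    (hx' : ∀ t, HasDerivAt x' (x'' t) t)
    (hx0 : ∀ t, x t ≠ 0)
    (heq : ∀ t, m • x'' t = -(C / ‖x t‖ ^ 3) • x t)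
    (L A : ℝ → EuclideanSpace ℝ (Fin 3))
    (hL : ∀ t, L t = m • cross3 (x t) (x' t))
    (hA : ∀ t, A t = m • cross3 (x' t) (L t) - (m * C / ‖x t‖) • x t) :
    ∀ t s : ℝ, A t = A s :=
  stmt_7_general m C x x' x'' hx hx' hx0 heq L A hL hA
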